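/- Suppose 0 < Y < X are real numbers and f : [Y, X] → ℝ is monotonic and continuously differentiable on (Y, X), with one-sided limits f(Y+), f(X−), f′(Y+), f′(X−) existing. Then for all real γ and every integer k ≥ 1, |∫_Y^X f(w)·e(γ·w^k) dw| ≤ (|f(X−)| + |f(Y+)|) · 2X/(1 + Y^k·|γ|), where e(z) = e^{2πiz}. -/

import Mathlib

/-!
Up to an error term, `e(γw^k)` is the derivative of `H(w) = e(γw^k) / (2πiγk w^(k-1))`, and
both `|H|` and the total mass of the error term are at most `1 / (2π|γ|k Y^(k-1))`. Integrating
by parts against the monotone `f`, whose total variation on `(Y, X)` is `|f(X−) − f(Y+)|`,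
bounds the integral by `3 (|f(X−)| + |f(Y+)|) / (2π|γ|k Y^(k-1))`. This is below the claimed
bound once `Y^k|γ| > 1`; otherwise the trivial bound `(X − Y) sup |f|` suffices.
-/

open Set Filter Topology MeasureTheory intervalIntegral Real

theorem ae_mem_Ioo_of_mem_Ioc {a b : ℝ} : ∀ᵐ x, x ∈ Ioc a b → x ∈ Ioo a b := by
  filter_upwards [Measure.ae_ne volume b] with x hxb hx using ⟨hx.1, hx.2.lt_of_ne hxb⟩

section Monotone

variable {f f' : ℝ → ℝ} {a b fa fb : ℝ}

theorem MonotoneOn.mem_Icc_of_tendsto (hf : MonotoneOn f (Icc a b))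
    (hfa : Tendsto f (𝓝[>] a) (𝓝 fa)) (hfb : Tendsto f (𝓝[<] b) (𝓝 fb)) {x : ℝ}
    (hx : x ∈ Ioo a b) : f x ∈ Icc fa fb := by
  have hxI : x ∈ Icc a b := Ioo_subset_Icc_self hx
  constructor
  · refine le_of_tendsto hfa ?_
    filter_upwards [Ioo_mem_nhdsGT hx.1] with y hy
    exact hf ⟨hy.1.le, (hy.2.trans hx.2).le⟩ hxI hy.2.le
  · refine ge_of_tendsto hfb ?_
    filter_upwards [Ioo_mem_nhdsLT hx.2] with y hy
    exact hf hxI ⟨(hx.1.trans hy.1).le, hy.2.le⟩ hy.1.le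

theorem MonotoneOn.abs_le_of_tendsto (hf : MonotoneOn f (Icc a b))
    (hfa : Tendsto f (𝓝[>] a) (𝓝 fa)) (hfb : Tendsto f (𝓝[<] b) (𝓝 fb)) {x : ℝ}
    (hx : x ∈ Ioo a b) : |f x| ≤ |fa| + |fb| := by
  obtain ⟨hax, hxb⟩ := hf.mem_Icc_of_tendsto hfa hfb hx
  exact (abs_le_max_abs_abs hax hxb).trans (max_le_add_of_nonneg (abs_nonneg _) (abs_nonneg _))

theorem MonotoneOn.nonneg_of_hasDerivAt {s : Set ℝ} {x d : ℝ} (hf : MonotoneOn f s)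
    (hs : s ∈ 𝓝 x) (hd : HasDerivAt f d x) : 0 ≤ d := by
  simpa [derivWithin_of_mem_nhds hs, hd.deriv] using hf.derivWithin_nonneg (x := x)

theorem MonotoneOn.intervalIntegrable_of_hasDerivAt (hf : MonotoneOn f (Icc a b)) (hab : a ≤ b)
    (hf' : ∀ x ∈ Ioo a b, HasDerivAt f (f' x) x) : IntervalIntegrable f' volume a b := by
  rw [← uIcc_of_le hab] at hf
  refine (intervalIntegrable_congr_uIoo fun x hx ↦ ?_).1 hf.intervalIntegrable_deriv
  exact (hf' x (uIoo_of_le hab ▸ hx)).deriv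

end Monotone

section IntegrationByParts

variable {E : Type*} [NormedAddCommGroup E] [NormedSpace ℝ E]
  {f f' : ℝ → ℝ} {a b fa fb : ℝ}

theorem integral_smul_deriv_eq_of_tendsto [CompleteSpace E] {H H' : ℝ → E} (hab : a < b)
    (hf' : ∀ x ∈ Ioo a b, HasDerivAt f (f' x) x)
    (hfi : IntervalIntegrable f volume a b) (hf'i : IntervalIntegrable f' volume a b)
    (hfa : Tendsto f (𝓝[>] a) (𝓝 fa)) (hfb : Tendsto f (𝓝[<] b) (𝓝 fb))
    (hH : ∀ x ∈ Icc a b, HasDerivAt H (H' x) x) (hH' : ContinuousOn H' (Icc a b)) :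
    ∫ x in a..b, f x • H' x = fb • H b - fa • H a - ∫ x in a..b, f' x • H x := by
  have hHc : ContinuousOn H (Icc a b) := fun x hx ↦ (hH x hx).continuousAt.continuousWithinAt
  rw [← uIcc_of_le hab.le] at hHc hH'
  have hI : IntervalIntegrable (fun x ↦ f x • H' x) volume a b := hfi.smul_continuousOn hH'
  have hI' : IntervalIntegrable (fun x ↦ f' x • H x) volume a b := hf'i.smul_continuousOn hHc
  have hlim : ∀ x ∈ Icc a b, ∀ s, Tendsto H (𝓝[s] x) (𝓝 (H x)) := fun x hx s ↦
    (hH x hx).continuousAt.tendsto.mono_left nhdsWithin_le_nhds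
  have hFTC : ∫ x in a..b, (f x • H' x + f' x • H x) = fb • H b - fa • H a :=
    integral_eq_sub_of_hasDerivAt_of_tendsto hab
      (fun x hx ↦ (hf' x hx).smul (hH x (Ioo_subset_Icc_self hx))) (hI.add hI')
      (hfa.smul (hlim a (left_mem_Icc.2 hab.le) _)) (hfb.smul (hlim b (right_mem_Icc.2 hab.le) _))
  rw [← hFTC, integral_add hI hI']
  abel

theorem MonotoneOn.norm_integral_deriv_smul_le {H : ℝ → E} {K : ℝ} (hab : a < b)
    (hf : MonotoneOn f (Icc a b)) (hf' : ∀ x ∈ Ioo a b, HasDerivAt f (f' x) x)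
    (hfa : Tendsto f (𝓝[>] a) (𝓝 fa)) (hfb : Tendsto f (𝓝[<] b) (𝓝 fb))
    (hHK : ∀ x ∈ Icc a b, ‖H x‖ ≤ K) :
    ‖∫ x in a..b, f' x • H x‖ ≤ (fb - fa) * K := by
  have hf'i := hf.intervalIntegrable_of_hasDerivAt hab.le hf'
  calc _ ≤ ∫ x in a..b, f' x * K := by
        refine norm_integral_le_of_norm_le hab.le ?_ (hf'i.mul_const K)
        filter_upwards [ae_mem_Ioo_of_mem_Ioc] with x hx hxI
        have hx' := hx hxI
        have hf'x := hf.nonneg_of_hasDerivAt (Icc_mem_nhds hx'.1 hx'.2) (hf' x hx')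
        rw [norm_smul, Real.norm_of_nonneg hf'x]
        exact mul_le_mul_of_nonneg_left (hHK x (Ioo_subset_Icc_self hx')) hf'x
    _ = (fb - fa) * K := by
      rw [intervalIntegral.integral_mul_const,
        integral_eq_sub_of_hasDerivAt_of_tendsto hab hf' hf'i hfa hfb]

theorem MonotoneOn.norm_integral_smul_le_mul_integral_norm {r : ℝ → E} (hab : a ≤ b)
    (hf : MonotoneOn f (Icc a b)) (hfa : Tendsto f (𝓝[>] a) (𝓝 fa))
    (hfb : Tendsto f (𝓝[<] b) (𝓝 fb)) (hr : ContinuousOn r (Icc a b)) :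
    ‖∫ x in a..b, f x • r x‖ ≤ (|fa| + |fb|) * ∫ x in a..b, ‖r x‖ := by
  rw [← intervalIntegral.integral_const_mul]
  refine norm_integral_le_of_norm_le hab ?_ ?_
  · filter_upwards [ae_mem_Ioo_of_mem_Ioc] with x hx hxI
    rw [norm_smul, Real.norm_eq_abs]
    exact mul_le_mul_of_nonneg_right (hf.abs_le_of_tendsto hfa hfb (hx hxI)) (norm_nonneg _)
  · exact (uIcc_of_le hab ▸ hr.norm).intervalIntegrable.const_mul _

theorem MonotoneOn.norm_integral_smul_le [CompleteSpace E] {g H r : ℝ → E} {K : ℝ}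
    (hab : a < b) (hf : MonotoneOn f (Icc a b)) (hf' : ∀ x ∈ Ioo a b, HasDerivAt f (f' x) x)
    (hfa : Tendsto f (𝓝[>] a) (𝓝 fa)) (hfb : Tendsto f (𝓝[<] b) (𝓝 fb))
    (hH : ∀ x ∈ Icc a b, HasDerivAt H (g x + r x) x)
    (hg : ContinuousOn g (Icc a b)) (hr : ContinuousOn r (Icc a b))
    (hHK : ∀ x ∈ Icc a b, ‖H x‖ ≤ K) :
    ‖∫ x in a..b, f x • g x‖ ≤
      (|fa| + |fb| + (fb - fa)) * K + (|fa| + |fb|) * ∫ x in a..b, ‖r x‖ := by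
  have hfi : IntervalIntegrable f volume a b :=
    (uIcc_of_le hab.le ▸ hf : MonotoneOn f (uIcc a b)).intervalIntegrable
  have hibp := integral_smul_deriv_eq_of_tendsto hab hf' hfi
    (hf.intervalIntegrable_of_hasDerivAt hab.le hf') hfa hfb hH (hg.add hr)
  rw [← uIcc_of_le hab.le] at hg hr
  simp only [smul_add] at hibp
  rw [integral_add (hfi.smul_continuousOn hg) (hfi.smul_continuousOn hr)] at hibp
  have hnorm (c : ℝ) {x : ℝ} (hx : x ∈ Icc a b) : ‖c • H x‖ ≤ |c| * K := by
    rw [norm_smul, Real.norm_eq_abs]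
    exact mul_le_mul_of_nonneg_left (hHK x hx) (abs_nonneg _)
  have hb := hnorm fb (right_mem_Icc.2 hab.le)
  have ha := hnorm fa (left_mem_Icc.2 hab.le)
  have hf'H := hf.norm_integral_deriv_smul_le hab hf' hfa hfb hHK
  have hfr := hf.norm_integral_smul_le_mul_integral_norm hab.le hfa hfb (uIcc_of_le hab.le ▸ hr)
  rw [eq_sub_iff_add_eq.2 hibp]
  calc _ ≤ ‖fb • H b‖ + ‖fa • H a‖ + ‖∫ x in a..b, f' x • H x‖
          + ‖∫ x in a..b, f x • r x‖ :=
        norm_sub_le_of_le (norm_sub_le_of_le (norm_sub_le _ _) le_rfl) le_rfl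
    _ ≤ _ := by linarith

end IntegrationByParts

theorem hasDerivAt_inv_pow (n : ℕ) {x : ℝ} (hx : x ≠ 0) :
    HasDerivAt (fun y ↦ (y ^ n)⁻¹) (-(n / x * (x ^ n)⁻¹)) x := by
  refine ((hasDerivAt_pow n x).inv (pow_ne_zero n hx)).congr_deriv ?_
  rcases n with _ | n
  · simp
  · simp only [Nat.add_sub_cancel]
    field_simp
    ring

noncomputable def powPhase (γ : ℝ) (k : ℕ) (w : ℝ) : ℂ :=
  Complex.exp (2 * π * Complex.I * (γ * (w : ℂ) ^ k))

-- `H(x) = e(γx^k) / (2πiγk x^(k-1))` with `k = n + 1`, so no exponent is a truncated `k - 1`.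
noncomputable def powPhaseWeight (γ : ℝ) (n : ℕ) (x : ℝ) : ℂ :=
  (((x ^ n)⁻¹ : ℝ) : ℂ) * powPhase γ (n + 1) x / (2 * π * Complex.I * γ * (n + 1))

section PowPhase

variable (γ : ℝ) (k n : ℕ)

theorem norm_powPhase (w : ℝ) : ‖powPhase γ k w‖ = 1 := by
  rw [powPhase, Complex.norm_exp]
  simp [← Complex.ofReal_pow]

theorem continuous_powPhase : Continuous (powPhase γ k) := by
  unfold powPhase
  fun_prop

theorem hasDerivAt_powPhase (w : ℝ) :
    HasDerivAt (powPhase γ k) (2 * π * Complex.I * γ * k * w ^ (k - 1) * powPhase γ k w) w := by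
  refine ((((hasDerivAt_pow k (w : ℂ)).comp_ofReal).const_mul (γ : ℂ)).const_mul
    (2 * π * Complex.I) |>.cexp).congr_deriv ?_
  rw [powPhase]
  ring

theorem norm_powPhaseWeight {x : ℝ} (hx : 0 < x) :
    ‖powPhaseWeight γ n x‖ = (x ^ n)⁻¹ / (2 * π * |γ| * (n + 1)) := by
  simp only [powPhaseWeight, norm_div, norm_mul, norm_powPhase, Complex.norm_real,
    Complex.norm_ofNat, Complex.norm_I, Real.norm_eq_abs, abs_of_pos pi_pos, mul_one]
  rw [abs_of_pos (by positivity)]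
  norm_cast

theorem hasDerivAt_powPhaseWeight (hγ : γ ≠ 0) {x : ℝ} (hx : x ≠ 0) :
    HasDerivAt (powPhaseWeight γ n)
      (powPhase γ (n + 1) x - ((n / x : ℝ) : ℂ) * powPhaseWeight γ n x) x := by
  refine (((hasDerivAt_inv_pow n hx).ofReal_comp.mul
    (hasDerivAt_powPhase γ (n + 1) x)).div_const _).congr_deriv ?_
  have hxn : (x : ℂ) ^ n ≠ 0 := pow_ne_zero n (Complex.ofReal_ne_zero.2 hx)
  have hγ' : (γ : ℂ) ≠ 0 := Complex.ofReal_ne_zero.2 hγ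
  have hn : (n + 1 : ℂ) ≠ 0 := by exact_mod_cast n.succ_ne_zero
  simp only [powPhaseWeight, Nat.add_sub_cancel]
  push_cast
  field_simp
  ring

theorem integral_norm_div_mul_powPhaseWeight_le {a b : ℝ} (ha : 0 < a) (hab : a ≤ b) :
    ∫ x in a..b, ‖((n / x : ℝ) : ℂ) * powPhaseWeight γ n x‖ ≤
      (a ^ n)⁻¹ / (2 * π * |γ| * (n + 1)) := by
  have hpos : ∀ x ∈ uIcc a b, 0 < x := fun x hx ↦ ha.trans_le (uIcc_of_le hab ▸ hx).1
  have hnorm : EqOn (fun x ↦ ‖((n / x : ℝ) : ℂ) * powPhaseWeight γ n x‖)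
      (fun x ↦ -(-(n / x * (x ^ n)⁻¹)) / (2 * π * |γ| * (n + 1))) (uIcc a b) := by
    intro x hx
    dsimp only
    rw [norm_mul, norm_powPhaseWeight γ n (hpos x hx), Complex.norm_real, Real.norm_of_nonneg
      (by have := hpos x hx; positivity)]
    ring
  have hFTC : ∫ x in a..b, -(n / x * (x ^ n)⁻¹) = (b ^ n)⁻¹ - (a ^ n)⁻¹ := by
    refine integral_eq_sub_of_hasDerivAt (fun x hx ↦ hasDerivAt_inv_pow n (hpos x hx).ne') ?_
    refine ContinuousOn.intervalIntegrable (ContinuousOn.neg (ContinuousOn.mul ?_ ?_))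
    · exact continuousOn_const.div continuousOn_id fun x hx ↦ (hpos x hx).ne'
    · exact (continuousOn_pow n).inv₀ fun x hx ↦ pow_ne_zero n (hpos x hx).ne'
  rw [integral_congr hnorm, intervalIntegral.integral_div, intervalIntegral.integral_neg, hFTC]
  have hb : 0 ≤ (b ^ n)⁻¹ := by have := ha.trans_le hab; positivity
  gcongr
  linarith

end PowPhase

theorem MonotoneOn.norm_integral_mul_powPhase_le_of_ne_zero {f f' : ℝ → ℝ}
    {a b fa fb γ : ℝ} {n : ℕ} (ha : 0 < a) (hab : a < b) (hγ : γ ≠ 0)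
    (hf : MonotoneOn f (Icc a b)) (hf' : ∀ x ∈ Ioo a b, HasDerivAt f (f' x) x)
    (hfa : Tendsto f (𝓝[>] a) (𝓝 fa)) (hfb : Tendsto f (𝓝[<] b) (𝓝 fb)) :
    ‖∫ x in a..b, (f x : ℂ) * powPhase γ (n + 1) x‖ ≤
      3 * (|fa| + |fb|) / (2 * π * |γ| * (n + 1) * a ^ n) := by
  set K := (a ^ n)⁻¹ / (2 * π * |γ| * (n + 1))
  have hpos : ∀ x ∈ Icc a b, 0 < x := fun x hx ↦ ha.trans_le hx.1
  have hW : ∀ x ∈ Icc a b, HasDerivAt (powPhaseWeight γ n)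
      (powPhase γ (n + 1) x + -(((n / x : ℝ) : ℂ) * powPhaseWeight γ n x)) x := fun x hx ↦
    (hasDerivAt_powPhaseWeight γ n hγ (hpos x hx).ne').congr_deriv (sub_eq_add_neg _ _)
  have hr :
      ContinuousOn (fun x ↦ -(((n / x : ℝ) : ℂ) * powPhaseWeight γ n x)) (Icc a b) := by
    refine (ContinuousOn.mul ?_ fun x hx ↦ (hW x hx).continuousAt.continuousWithinAt).neg
    exact Complex.continuous_ofReal.comp_continuousOn
      (continuousOn_const.div continuousOn_id fun x hx ↦ (hpos x hx).ne')
  have hWK : ∀ x ∈ Icc a b, ‖powPhaseWeight γ n x‖ ≤ K := fun x hx ↦ by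
    rw [norm_powPhaseWeight γ n (hpos x hx)]
    simp only [K]
    gcongr
    exact hx.1
  have hbound := hf.norm_integral_smul_le hab hf' hfa hfb hW
    (continuous_powPhase γ (n + 1)).continuousOn hr hWK
  simp only [Complex.real_smul, norm_neg] at hbound
  have herr := integral_norm_div_mul_powPhaseWeight_le γ n ha hab.le
  have hdiff : fb - fa ≤ |fa| + |fb| := by linarith [le_abs_self fb, neg_abs_le fa]
  calc _ ≤ (|fa| + |fb| + (fb - fa)) * K + (|fa| + |fb|) * K := hbound.trans (by gcongr)
    _ ≤ 3 * (|fa| + |fb|) * K := by nlinarith [show 0 ≤ K by positivity]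
    _ = _ := by simp only [K]; field_simp

theorem norm_integral_mul_powPhase_le_of_abs_le {f : ℝ → ℝ} {a b M γ : ℝ} {k : ℕ}
    (hab : a ≤ b) (hM : ∀ x ∈ Ioo a b, |f x| ≤ M) :
    ‖∫ x in a..b, (f x : ℂ) * powPhase γ k x‖ ≤ M * (b - a) := by
  have h := norm_integral_le_of_norm_le_const_ae (a := a) (b := b) (C := M)
    (f := fun x ↦ (f x : ℂ) * powPhase γ k x) ?_
  · rwa [abs_of_nonneg (sub_nonneg.2 hab)] at h
  filter_upwards [ae_mem_Ioo_of_mem_Ioc] with x hx hxI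
  rw [norm_mul, norm_powPhase, mul_one, Complex.norm_real, Real.norm_eq_abs]
  exact hM x (hx (uIoc_of_le hab ▸ hxI))

theorem three_div_le_two_mul_div {Y X c : ℝ} {n : ℕ} (hY : 0 < Y) (hYX : Y ≤ X) (hc : 0 < c)
    (hT : 1 < Y ^ (n + 1) * c) :
    3 / (2 * π * c * (n + 1) * Y ^ n) ≤ 2 * X / (1 + Y ^ (n + 1) * c) := by
  have hD : 0 < c * Y ^ n := by positivity
  have hX : 0 < X := hY.trans_le hYX
  have hT' : 1 < Y * (c * Y ^ n) := by rw [pow_succ] at hT; linarith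
  have hn : (1 : ℝ) ≤ n + 1 := by linarith [n.cast_nonneg (α := ℝ)]
  rw [div_le_div_iff₀ (by positivity) (by positivity), pow_succ]
  nlinarith [pi_gt_three, mul_le_mul_of_nonneg_right hYX hD.le,
    mul_le_mul_of_nonneg_left hn (by positivity : 0 ≤ π * X * (c * Y ^ n))]

theorem MonotoneOn.norm_integral_mul_powPhase_le {f f' : ℝ → ℝ} {Y X fY fX : ℝ} {n : ℕ}
    (hY : 0 < Y) (hYX : Y < X) (hf : MonotoneOn f (Icc Y X))
    (hf' : ∀ x ∈ Ioo Y X, HasDerivAt f (f' x) x)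
    (hfY : Tendsto f (𝓝[>] Y) (𝓝 fY)) (hfX : Tendsto f (𝓝[<] X) (𝓝 fX)) (γ : ℝ) :
    ‖∫ x in Y..X, (f x : ℂ) * powPhase γ (n + 1) x‖ ≤
      (|fX| + |fY|) * (2 * X / (1 + Y ^ (n + 1) * |γ|)) := by
  rw [add_comm |fX|]
  by_cases hT : Y ^ (n + 1) * |γ| ≤ 1
  · refine (norm_integral_mul_powPhase_le_of_abs_le hYX.le
      fun x hx ↦ hf.abs_le_of_tendsto hfY hfX hx).trans ?_
    gcongr
    rw [le_div_iff₀ (by positivity)]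
    nlinarith
  · replace hT := not_le.1 hT
    have hγ : γ ≠ 0 := by
      rintro rfl
      rw [abs_zero, mul_zero] at hT
      exact zero_le_one.not_gt hT
    refine (hf.norm_integral_mul_powPhase_le_of_ne_zero hY hYX hγ hf' hfY hfX).trans ?_
    rw [mul_comm 3, mul_div_assoc]
    exact mul_le_mul_of_nonneg_left (three_div_le_two_mul_div hY hYX.le (abs_pos.2 hγ) hT)
      (by positivity)

theorem stmt7 (Y X : ℝ) (hY : 0 < Y) (hYX : Y < X) (k : ℕ) (hk : 1 ≤ k)
    (f f' : ℝ → ℝ)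
    (hmono : MonotoneOn f (Set.Icc Y X) ∨ AntitoneOn f (Set.Icc Y X))
    (hderiv : ∀ w ∈ Set.Ioo Y X, HasDerivAt f (f' w) w)
    (fYp fXm : ℝ)
    (hfY : Filter.Tendsto f (nhdsWithin Y (Set.Ioi Y)) (nhds fYp))
    (hfX : Filter.Tendsto f (nhdsWithin X (Set.Iio X)) (nhds fXm))
    (γ : ℝ) :
    ‖∫ w in Y..X, (f w : ℂ) *
        Complex.exp (2 * Real.pi * Complex.I * (γ * (w : ℂ) ^ k))‖
      ≤ (|fXm| + |fYp|) * (2 * X / (1 + Y ^ k * |γ|)) := by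
  obtain ⟨n, rfl⟩ := Nat.exists_eq_add_of_le' hk
  change ‖∫ w in Y..X, (f w : ℂ) * powPhase γ (n + 1) w‖ ≤ _
  rcases hmono with hf | hf
  · exact hf.norm_integral_mul_powPhase_le hY hYX hderiv hfY hfX γ
  · have h := hf.neg.norm_integral_mul_powPhase_le (n := n) hY hYX
      (fun w hw ↦ (hderiv w hw).neg) hfY.neg hfX.neg γ
    simpa only [Complex.ofReal_neg, neg_mul, intervalIntegral.integral_neg, norm_neg, abs_neg]
      using h
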